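/- Let T = Σᵢ₌₀³ cᵢτᵢ with cᵢ ∈ ℝ, where τᵢ = τ₀∘σᵢ. Then T² = I if and only if c₁² + c₂² + c₃² - c₀² = 1, and T² = -I if and only if c₁² + c₂² + c₃² - c₀² = -1. -/
import Mathlib

open Matrix Complex

noncomputable def pauli : Fin 3 → Matrix (Fin 2) (Fin 2) ℂ :=
  ![!![0, 1; 1, 0], !![0, -I; I, 0], !![1, 0; 0, -1]]

/-- The antilinear map `τ₀(x₁, x₂) = (-x̄₂, x̄₁)`. -/
noncomputable def tau0 (x : Fin 2 → ℂ) : Fin 2 → ℂ :=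
  ![-(starRingEnd ℂ (x 1)), starRingEnd ℂ (x 0)]

/-- `τᵢ` for `i = 0, 1, 2, 3`: `τ₀` and `τᵢ = τ₀ ∘ σᵢ`. -/
noncomputable def tau : Fin 4 → (Fin 2 → ℂ) → (Fin 2 → ℂ)
  | 0 => tau0
  | 1 => fun x => tau0 ((pauli 0).mulVec x)
  | 2 => fun x => tau0 ((pauli 1).mulVec x)
  | 3 => fun x => tau0 ((pauli 2).mulVec x)

theorem stmt11 (c : Fin 4 → ℝ)
    (T : (Fin 2 → ℂ) → (Fin 2 → ℂ)) (hT : ∀ x, T x = ∑ i : Fin 4, (c i : ℂ) • tau i x) :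
    ((∀ x, T (T x) = x) ↔ c 1 ^ 2 + c 2 ^ 2 + c 3 ^ 2 - c 0 ^ 2 = 1) ∧
    ((∀ x, T (T x) = -x) ↔ c 1 ^ 2 + c 2 ^ 2 + c 3 ^ 2 - c 0 ^ 2 = -1) := by
  have key : ∀ x, T (T x) = ((c 1 ^ 2 + c 2 ^ 2 + c 3 ^ 2 - c 0 ^ 2 : ℝ) : ℂ) • x := by
    intro x
    rw [hT, hT]
    funext j
    fin_cases j <;>
      simp [tau, tau0, pauli, Fin.sum_univ_four, mulVec, dotProduct, Fin.sum_univ_two,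
        map_add, _root_.map_mul, map_neg, Complex.I_sq, Complex.conj_conj, Complex.conj_ofReal, Complex.conj_I] <;>
      (ring_nf; simp only [Complex.I_sq]; ring)
  set k : ℝ := c 1 ^ 2 + c 2 ^ 2 + c 3 ^ 2 - c 0 ^ 2 with hk
  constructor
  · constructor
    · intro h
      have := h ![1, 0]
      rw [key] at this
      have := congrFun this 0
      simp at this
      exact_mod_cast this
    · intro h x
      rw [key, h]
      simp
  · constructor
    · intro h
      have := h ![1, 0]
      rw [key] at this
      have := congrFun this 0
      simp at this
      exact_mod_cast this
    · intro h x
      rw [key, h]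
      funext j
      simp
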